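/- arXiv:1608.08262 — 5 statements merged into one kernel-verified Lean document; each statement's English description precedes it below -/
import Mathlib

section
/- The program P2 consisting of the single rule 'p(1) :- card{X: p(X)} >= 0' has no Alog answer set, but has exactly one answer set, namely {p(1)}, under the Slog+ semantics. -/
/- Program P2 = { p(1) :- card{X:p(X)} >= 0 }.  Atoms `p(0), p(1)` are `0, 1 : Fin 2`. -/

/-- Alog: the aggregate `card{X:p(X)} >= 0` is always true, so the set reduct w.r.t. `A`
replaces it by the body `A`.  `B` satisfies this reduct iff `A ⊆ B → p(1) ∈ B`. -/
def SatisfiesAlogReductP2 (A B : Finset (Fin 2)) : Prop :=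
  A ⊆ B → (1 : Fin 2) ∈ B

/-- `A` is an Alog answer set of P2. -/
def IsAlogAnswerSetP2 (A : Finset (Fin 2)) : Prop :=
  SatisfiesAlogReductP2 A A ∧ ∀ B ⊂ A, ¬ SatisfiesAlogReductP2 A B

/-- `W` is a minimal support in `A` for the aggregate atom `card{X:p(X)} >= 0`:
`W ⊆ A`, every `V` with `W ⊆ V ⊆ A` satisfies `0 ≤ V.card`, and no proper subset
of `W` has these properties. -/
def IsMinSupportP2 (A W : Finset (Fin 2)) : Prop :=
  (W ⊆ A ∧ ∀ V, W ⊆ V → V ⊆ A → 0 ≤ V.card) ∧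
  ∀ U ⊂ W, ¬ (U ⊆ A ∧ ∀ V, U ⊆ V → V ⊆ A → 0 ≤ V.card)

/-- `A` is an Slog+ answer set of P2: for some minimal support `W` of the aggregate in `A`,
`A` is a minimal model of the reduct `{ p(1) :- W }`. -/
def IsSlogAnswerSetP2 (A : Finset (Fin 2)) : Prop :=
  ∃ W, IsMinSupportP2 A W ∧
    (W ⊆ A → (1 : Fin 2) ∈ A) ∧ ∀ B ⊂ A, ¬ (W ⊆ B → (1 : Fin 2) ∈ B)

/-- P2 has no Alog answer set, but exactly one Slog+ answer set, namely `{p(1)}`. -/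
theorem P2_alog_vs_slog :
    (∀ A : Finset (Fin 2), ¬ IsAlogAnswerSetP2 A) ∧
    (∀ A : Finset (Fin 2), IsSlogAnswerSetP2 A ↔ A = {1}) := by
  constructor
  · rintro A ⟨h1, h2⟩
    have hA : (1 : Fin 2) ∈ A := h1 (le_refl A)
    have hne : A.Nonempty := ⟨1, hA⟩
    exact h2 ∅ (Finset.empty_ssubset.mpr hne) (fun hsub => hsub hA)
  · intro A
    constructor
    · rintro ⟨W, ⟨⟨hWA, _⟩, hmin⟩, h1, hB⟩
      have hW : W = ∅ := by
        by_contra hWne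
        exact hmin ∅ (Finset.empty_ssubset.mpr (Finset.nonempty_iff_ne_empty.mpr hWne))
          ⟨Finset.empty_subset A, fun V _ _ => Nat.zero_le _⟩
      subst hW
      have h1A : (1 : Fin 2) ∈ A := h1 (Finset.empty_subset A)
      apply Finset.eq_singleton_iff_unique_mem.mpr
      refine ⟨h1A, fun x hx => ?_⟩
      by_contra hx1
      have hx0 : x = 0 := by fin_cases x <;> simp_all
      have hss : ({1} : Finset (Fin 2)) ⊂ A := by
        constructor
        · intro y hy; simp at hy; subst hy; exact h1A
        · intro hAs
          have := hAs hx
          simp [hx0] at this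
      exact hB {1} hss (fun _ => Finset.mem_singleton_self 1)
    · rintro rfl
      refine ⟨∅, ⟨⟨Finset.empty_subset _, fun V _ _ => Nat.zero_le _⟩,
        fun U hU => absurd hU (by simp)⟩, fun _ => Finset.mem_singleton_self 1, ?_⟩
      intro B hB h
      rw [Finset.ssubset_singleton_iff] at hB
      subst hB
      exact absurd (h (Finset.empty_subset _)) (Finset.notMem_empty _)
end

section
/- The program P3 consisting of rules 'p(3) :- card{X:p(X)} >= 2', 'p(2) :- card{X:p(X)} >= 2', and the fact p(1) has exactly one Slog+ answer set, namely {p(1)}. In particular {p(1), p(2), p(3)} is not an Slog+ answer set of P3. -/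
/- Program P3 = { p(3) :- card{X:p(X)} >= 2.  p(2) :- card{X:p(X)} >= 2.  p(1). }
Atoms `p(1), p(2), p(3)` are encoded as `0, 1, 2 : Fin 3`. -/

/-- `W` is a minimal support in `A` for the aggregate atom `card{X:p(X)} >= 2`:
`W ⊆ A`, every `V` with `W ⊆ V ⊆ A` has at least two atoms, and no proper subset
of `W` has these properties. -/
def IsMinSupportP3 (A W : Finset (Fin 3)) : Prop :=
  (W ⊆ A ∧ ∀ V, W ⊆ V → V ⊆ A → 2 ≤ V.card) ∧
  ∀ U ⊂ W, ¬ (U ⊆ A ∧ ∀ V, U ⊆ V → V ⊆ A → 2 ≤ V.card)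

/-- `B` satisfies the Slog+ set reduct of P3 w.r.t. `A`, where the aggregate of the
first rule was replaced by `Wa` and that of the second rule by `Wb` (the rules are
removed when the aggregate is false in `A`, i.e. `A.card < 2`). -/
def SatisfiesReductP3 (A Wa Wb B : Finset (Fin 3)) : Prop :=
  (0 : Fin 3) ∈ B ∧
  (2 ≤ A.card → ((Wa ⊆ B → (2 : Fin 3) ∈ B) ∧ (Wb ⊆ B → (1 : Fin 3) ∈ B)))

/-- `A` is an Slog+ answer set of P3: for some choice of minimal supports `Wa`, `Wb`
(needed only when the aggregate is true in `A`), `A` is a minimal model of the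
corresponding Slog+ set reduct. -/
def IsSlogAnswerSetP3 (A : Finset (Fin 3)) : Prop :=
  ∃ Wa Wb, (2 ≤ A.card → IsMinSupportP3 A Wa ∧ IsMinSupportP3 A Wb) ∧
    SatisfiesReductP3 A Wa Wb A ∧ ∀ B ⊂ A, ¬ SatisfiesReductP3 A Wa Wb B

/-- P3 has exactly one Slog+ answer set, namely `{p(1)}`; in particular
`{p(1), p(2), p(3)}` is not an Slog+ answer set of P3. -/
theorem P3_slog_answer_sets :
    (∀ A : Finset (Fin 3), IsSlogAnswerSetP3 A ↔ A = {0}) ∧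
    ¬ IsSlogAnswerSetP3 {0, 1, 2} := by
  have main : ∀ A : Finset (Fin 3), IsSlogAnswerSetP3 A ↔ A = {0} := by
    intro A
    constructor
    · rintro ⟨Wa, Wb, hmin, ⟨h0, -⟩, hminmod⟩
      by_cases h2 : 2 ≤ A.card
      · exfalso
        obtain ⟨⟨hWaA, hWa⟩, -⟩ := (hmin h2).1
        have hWacard : 2 ≤ Wa.card := hWa Wa (subset_refl _) hWaA
        have hsub : ({0} : Finset (Fin 3)) ⊆ A := by
          intro x hx
          simp only [Finset.mem_singleton] at hx
          subst hx; exact h0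
        have hss : ({0} : Finset (Fin 3)) ⊂ A := by
          refine ⟨hsub, fun hAs => ?_⟩
          have := Finset.card_le_card hAs
          simp at this; omega
        apply hminmod {0} hss
        refine ⟨by simp, fun _ => ⟨fun hW => ?_, fun hW => ?_⟩⟩
        · have := Finset.card_le_card hW
          simp at this; omega
        · have hWbcard : 2 ≤ Wb.card := by
            obtain ⟨⟨hWbA, hWb⟩, -⟩ := (hmin h2).2
            exact hWb Wb (subset_refl _) hWbA
          have := Finset.card_le_card hW
          simp at this; omega
      · have hle : A.card ≤ 1 := by omega
        have hsub : ({0} : Finset (Fin 3)) ⊆ A := by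
          intro x hx
          simp only [Finset.mem_singleton] at hx
          subst hx; exact h0
        have := Finset.eq_of_subset_of_card_le hsub (by simpa using hle)
        exact this.symm
    · rintro rfl
      refine ⟨∅, ∅, ?_, ⟨by simp, ?_⟩, ?_⟩
      · intro h; simp at h
      · intro h; simp at h
      · intro B hB
        have : B = ∅ := by
          rcases Finset.ssubset_singleton_iff.mp hB with h
          exact h
        subst this
        rintro ⟨h0, -⟩
        simp at h0
  refine ⟨main, ?_⟩
  intro h
  have := (main _).mp h
  have : (2 : Fin 3) ∈ ({0} : Finset (Fin 3)) := this ▸ (by decide)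
  simp at this
end

section
/- Theorem 1 (specialized): for any program Π over a countable set of atoms whose rules have heads that are single atoms and bodies consisting of regular atoms and cardinality aggregate atoms of the form 'card{X:p(X)} ⊙ k', if A is an Alog answer set of Π then A is an Slog+ answer set of Π. -/
/-- A cardinality aggregate atom `card{X : q(X)} ⊙ k`: `pred t` is the atom `q(t)`
(terms taken to be natural numbers) and `cond n` expresses the condition `n ⊙ k`
on the (finite) cardinality of the witness set. -/
structure AggAtom (Atom : Type*) where
  pred : ℕ → Atom
  cond : ℕ → Prop

/-- A rule with a single-atom head, a regular body and an aggregate body. -/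
structure Rule (Atom : Type*) where
  head : Atom
  rbody : Set Atom
  abody : Set (AggAtom Atom)

/-- The aggregate atom `ag` is (defined and) true in `A`: the witness set
`{t | q(t) ∈ A}` is finite and its cardinality satisfies the condition. -/
def AggTrue {Atom : Type*} (ag : AggAtom Atom) (A : Set Atom) : Prop :=
  {t | ag.pred t ∈ A}.Finite ∧ ag.cond {t | ag.pred t ∈ A}.ncard

/-- The witness set of `ag` in `A`, as a set of atoms: `{q(t) : q(t) ∈ A}`. -/
def AggWitness {Atom : Type*} (ag : AggAtom Atom) (A : Set Atom) : Set Atom :=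
  {a | a ∈ A ∧ ∃ t, a = ag.pred t}

/-- `B` satisfies the Alog set reduct of `Π` w.r.t. `A`: rules with a false or
undefined aggregate atom are removed, and each remaining aggregate atom is replaced
by its witness set in `A`. -/
def SatisfiesAlogReduct {Atom : Type*} (Pi : Set (Rule Atom)) (A B : Set Atom) : Prop :=
  ∀ r ∈ Pi, (∀ ag ∈ r.abody, AggTrue ag A) →
    (r.rbody ⊆ B ∧ ∀ ag ∈ r.abody, AggWitness ag A ⊆ B) → r.head ∈ B

/-- `A` is an Alog answer set of `Π`: a minimal model of the Alog set reduct. -/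
def IsAlogAnswerSet {Atom : Type*} (Pi : Set (Rule Atom)) (A : Set Atom) : Prop :=
  SatisfiesAlogReduct Pi A A ∧ ∀ B ⊂ A, ¬ SatisfiesAlogReduct Pi A B

/-- `W` is a support of `ag` in `A`: `W ⊆ A` and every `V` with `W ⊆ V ⊆ A`
makes `ag` true. -/
def IsSupport {Atom : Type*} (ag : AggAtom Atom) (A W : Set Atom) : Prop :=
  W ⊆ A ∧ ∀ V, W ⊆ V → V ⊆ A → AggTrue ag V

/-- `W` is a minimal support of `ag` in `A`. -/
def IsMinSupport {Atom : Type*} (ag : AggAtom Atom) (A W : Set Atom) : Prop :=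
  IsSupport ag A W ∧ ∀ U ⊂ W, ¬ IsSupport ag A U

/-- `B` satisfies the Slog+ set reduct of `Π` w.r.t. `A` determined by the choice
function `σ` selecting, for each rule and aggregate atom, the set replacing that
aggregate atom. -/
def SatisfiesSlogReduct {Atom : Type*} (Pi : Set (Rule Atom))
    (sig : Rule Atom → AggAtom Atom → Set Atom) (A B : Set Atom) : Prop :=
  ∀ r ∈ Pi, (∀ ag ∈ r.abody, AggTrue ag A) →
    (r.rbody ⊆ B ∧ ∀ ag ∈ r.abody, sig r ag ⊆ B) → r.head ∈ B

/-- `A` is an Slog+ answer set of `Π`: for some choice `σ` of minimal supports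
(for the aggregate atoms of rules that are not removed), `A` is a minimal model
of the corresponding Slog+ set reduct. -/
def IsSlogAnswerSet {Atom : Type*} (Pi : Set (Rule Atom)) (A : Set Atom) : Prop :=
  ∃ sig : Rule Atom → AggAtom Atom → Set Atom,
    (∀ r ∈ Pi, (∀ ag ∈ r.abody, AggTrue ag A) →
      ∀ ag ∈ r.abody, IsMinSupport ag A (sig r ag)) ∧
    SatisfiesSlogReduct Pi sig A A ∧ ∀ B ⊂ A, ¬ SatisfiesSlogReduct Pi sig A B

lemma exists_min_support {Atom : Type*} (ag : AggAtom Atom) (A : Set Atom)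
    (h : AggTrue ag A) :
    ∃ W', W' ⊆ AggWitness ag A ∧ IsMinSupport ag A W' := by
  have hWsub : AggWitness ag A ⊆ A := fun a ha => ha.1
  have hWfin : (AggWitness ag A).Finite := by
    have hsub : AggWitness ag A ⊆ ag.pred '' {t | ag.pred t ∈ A} := by
      rintro a ⟨haA, t, rfl⟩; exact ⟨t, haA, rfl⟩
    exact (h.1.image _).subset hsub
  have hsupp : IsSupport ag A (AggWitness ag A) := by
    refine ⟨hWsub, fun V hWV hVA => ?_⟩
    have hEq : {t | ag.pred t ∈ V} = {t | ag.pred t ∈ A} := by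
      ext t
      exact ⟨fun ht => hVA ht, fun ht => hWV ⟨ht, t, rfl⟩⟩
    rw [AggTrue, hEq]; exact h
  suffices H : ∀ n, ∀ W', W'.ncard ≤ n → W' ⊆ AggWitness ag A → IsSupport ag A W' →
      ∃ W'', W'' ⊆ AggWitness ag A ∧ IsMinSupport ag A W'' from
    H _ (AggWitness ag A) le_rfl subset_rfl hsupp
  intro n
  induction n with
  | zero =>
    intro W' hc hsub hs
    have hfin : W'.Finite := hWfin.subset hsub
    have : W' = ∅ := by
      rw [← Set.ncard_eq_zero hfin]; omega
    subst this
    exact ⟨∅, Set.empty_subset _, ⟨hs, fun U hU => (by simpa using hU.2 (Set.empty_subset U))⟩⟩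
  | succ n ih =>
    intro W' hc hsub hs
    by_cases hmin : ∀ U, U ⊂ W' → ¬ IsSupport ag A U
    · exact ⟨W', hsub, hs, hmin⟩
    · push_neg at hmin
      obtain ⟨U, hUW, hU⟩ := hmin
      refine ih U ?_ (hUW.subset.trans hsub) hU
      have hlt : U.ncard < W'.ncard := Set.ncard_lt_ncard hUW (hWfin.subset hsub)
      omega

/-- Theorem 1 (specialized): every Alog answer set of `Π` is also an Slog+
answer set of `Π`. -/
theorem alog_answer_set_is_slog_answer_set {Atom : Type*} [Countable Atom]
    (Pi : Set (Rule Atom)) (A : Set Atom) :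
    IsAlogAnswerSet Pi A → IsSlogAnswerSet Pi A := by
  classical
  rintro ⟨hsat, hmin⟩
  refine ⟨fun _ ag => if h : AggTrue ag A then (exists_min_support ag A h).choose else ∅,
    ?_, ?_, ?_⟩
  · intro r hr htrue ag hag
    simp only [dif_pos (htrue ag hag)]
    exact (exists_min_support ag A (htrue ag hag)).choose_spec.2
  · intro r hr htrue ⟨hrb, _⟩
    exact hsat r hr htrue ⟨hrb, fun ag _ a ha => ha.1⟩
  · intro B hBA hB
    refine hmin B hBA ?_
    intro r hr htrue ⟨hrb, hw⟩
    refine hB r hr htrue ⟨hrb, fun ag hag => ?_⟩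
    simp only [dif_pos (htrue ag hag)]
    exact (exists_min_support ag A (htrue ag hag)).choose_spec.1.trans (hw ag hag)
end

section
/- Anti-chain property: if Π is a program (with cardinality aggregate atoms in rule bodies but no set atoms in rule heads), and A1, A2 are both Alog answer sets of Π, then A1 is not a proper subset of A2. -/
/-- Anti-chain property: no two Alog answer sets of a program (without set atoms in
rule heads) are in proper inclusion. -/
theorem alog_antichain {Atom : Type*} [Countable Atom]
    (Pi : Set (Rule Atom)) (A1 A2 : Set Atom)
    (h1 : IsAlogAnswerSet Pi A1) (h2 : IsAlogAnswerSet Pi A2) : ¬ A1 ⊂ A2 := by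
  intro hss
  apply h2.2 A1 hss
  intro r hr hagg ⟨hrb, hwb⟩
  -- for each aggregate atom, witness sets in A1 and A2 coincide
  have hkey : ∀ ag ∈ r.abody, {t | ag.pred t ∈ A1} = {t | ag.pred t ∈ A2} := by
    intro ag hag
    ext t
    simp only [Set.mem_setOf_eq]
    constructor
    · exact fun h => hss.1 h
    · intro h
      exact (hwb ag hag ⟨h, t, rfl⟩)
  have hagg1 : ∀ ag ∈ r.abody, AggTrue ag A1 := by
    intro ag hag
    have h2t := hagg ag hag
    unfold AggTrue at *
    rw [hkey ag hag]
    exact h2t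
  exact h1.1 r hr hagg1 ⟨hrb, fun ag hag a ha => ha.1⟩
end

section
/- Splitting Set Theorem for Alog: let Π be a ground program, S a splitting set of Π, Π1 the bottom and Π2 the top of Π relative to S. Then a set A of atoms is an Alog answer set of Π if and only if A ∩ S is an Alog answer set of Π1 and A is an Alog answer set of the program consisting of Π2 together with the facts A ∩ S. -/
/-- Atom `a` occurs in the body of rule `r`: it is in the regular body or occurs
in some aggregate atom of the body (i.e. is of the form `q(t)`). -/
def OccursInBody {Atom : Type*} (r : Rule Atom) (a : Atom) : Prop :=
  a ∈ r.rbody ∨ ∃ ag ∈ r.abody, ∃ t, a = ag.pred t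

/-- `S` is a splitting set of `Π`: for every rule whose head is in `S`, every atom
occurring in its body belongs to `S`. -/
def IsSplittingSet {Atom : Type*} (Pi : Set (Rule Atom)) (S : Set Atom) : Prop :=
  ∀ r ∈ Pi, r.head ∈ S → ∀ a, OccursInBody r a → a ∈ S

/-- The bottom of `Π` relative to `S`: the rules all of whose atoms belong to `S`. -/
def BottomPart {Atom : Type*} (Pi : Set (Rule Atom)) (S : Set Atom) : Set (Rule Atom) :=
  {r ∈ Pi | r.head ∈ S ∧ ∀ a, OccursInBody r a → a ∈ S}

/-- The top of `Π` relative to `S`: the remaining rules. -/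
def TopPart {Atom : Type*} (Pi : Set (Rule Atom)) (S : Set Atom) : Set (Rule Atom) :=
  Pi \ BottomPart Pi S

/-- The set `X` of atoms regarded as a program of facts. -/
def Facts {Atom : Type*} (X : Set Atom) : Set (Rule Atom) :=
  {r | ∃ a ∈ X, r = ⟨a, ∅, ∅⟩}

section Aux
variable {Atom : Type*}

lemma bottom_pred_mem {Pi : Set (Rule Atom)} {S : Set Atom} {r : Rule Atom}
    (hr : r ∈ BottomPart Pi S) {ag : AggAtom Atom} (hag : ag ∈ r.abody) (t : ℕ) :
    ag.pred t ∈ S := hr.2.2 _ (Or.inr ⟨ag, hag, t, rfl⟩)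

lemma bottom_rbody_sub {Pi : Set (Rule Atom)} {S : Set Atom} {r : Rule Atom}
    (hr : r ∈ BottomPart Pi S) : r.rbody ⊆ S := fun a ha => hr.2.2 a (Or.inl ha)

lemma aggTrue_inter {ag : AggAtom Atom} {S A : Set Atom} (h : ∀ t, ag.pred t ∈ S) :
    AggTrue ag (A ∩ S) ↔ AggTrue ag A := by
  have hset : {t | ag.pred t ∈ A ∩ S} = {t | ag.pred t ∈ A} := by
    ext t; simp only [Set.mem_setOf_eq, Set.mem_inter_iff, h t, and_true]
  unfold AggTrue; rw [hset]

lemma aggWitness_inter {ag : AggAtom Atom} {S A : Set Atom} (h : ∀ t, ag.pred t ∈ S) :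
    AggWitness ag (A ∩ S) = AggWitness ag A := by
  ext a
  constructor
  · rintro ⟨⟨hA, _⟩, ht⟩; exact ⟨hA, ht⟩
  · rintro ⟨hA, t, rfl⟩; exact ⟨⟨hA, h t⟩, t, rfl⟩

lemma aggWitness_sub_S {ag : AggAtom Atom} {S A : Set Atom} (h : ∀ t, ag.pred t ∈ S) :
    AggWitness ag A ⊆ S := by rintro a ⟨_, t, rfl⟩; exact h t

lemma aggWitness_sub {ag : AggAtom Atom} {A : Set Atom} : AggWitness ag A ⊆ A :=
  fun _ ha => ha.1

lemma top_head_notMem {Pi : Set (Rule Atom)} {S : Set Atom} (hS : IsSplittingSet Pi S)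
    {r : Rule Atom} (hr : r ∈ TopPart Pi S) : r.head ∉ S :=
  fun hh => hr.2 ⟨hr.1, hh, hS r hr.1 hh⟩

lemma facts_sub {X A B : Set Atom} (h : SatisfiesAlogReduct (Facts X) A B) : X ⊆ B := by
  intro a ha
  exact h ⟨a, ∅, ∅⟩ ⟨a, ha, rfl⟩ (fun ag hag => absurd hag (Set.notMem_empty ag))
    ⟨Set.empty_subset _, fun ag hag => absurd hag (Set.notMem_empty ag)⟩

end Aux

/-- Splitting Set Theorem for Alog: `A` is an Alog answer set of `Π` iff `A ∩ S` is an
Alog answer set of the bottom of `Π` relative to `S` and `A` is an Alog answer set of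
the top of `Π` relative to `S` together with the facts `A ∩ S`. -/
theorem alog_splitting_set {Atom : Type*} [Countable Atom]
    (Pi : Set (Rule Atom)) (S : Set Atom) (hS : IsSplittingSet Pi S) (A : Set Atom) :
    IsAlogAnswerSet Pi A ↔
      IsAlogAnswerSet (BottomPart Pi S) (A ∩ S) ∧
      IsAlogAnswerSet (TopPart Pi S ∪ Facts (A ∩ S)) A := by
  constructor
  · rintro ⟨hA, hAmin⟩
    constructor
    · -- A ∩ S is an answer set of the bottom
      constructor
      · intro r hr hags ⟨hrb, hwit⟩
        have hags' : ∀ ag ∈ r.abody, AggTrue ag A := fun ag hag =>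
          (aggTrue_inter (bottom_pred_mem hr hag)).mp (hags ag hag)
        have hhead : r.head ∈ A := by
          refine hA r hr.1 hags' ⟨hrb.trans Set.inter_subset_left, fun ag hag => ?_⟩
          rw [← aggWitness_inter (bottom_pred_mem hr hag)]
          exact (hwit ag hag).trans Set.inter_subset_left
        exact ⟨hhead, hr.2.1⟩
      · intro B hB hBsat
        obtain ⟨hBsub, hne⟩ := hB
        obtain ⟨x, hxAS, hxB⟩ := Set.not_subset.mp hne
        set B' := B ∪ (A \ S) with hB'def
        have hB'A : B' ⊂ A := by
          constructor
          · rintro a (ha | ha)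
            · exact (hBsub ha).1
            · exact ha.1
          · intro hAB'
            rcases hAB' hxAS.1 with h | h
            · exact hxB h
            · exact h.2 hxAS.2
        refine hAmin B' hB'A ?_
        intro r hr hags ⟨hrb, hwit⟩
        by_cases hbot : r ∈ BottomPart Pi S
        · -- bottom rule: derive via B
          have hBS : B ⊆ S := fun a ha => (hBsub ha).2
          have hB'S : B' ∩ S ⊆ B := by
            rintro a ⟨(ha | ha), haS⟩
            · exact ha
            · exact absurd haS ha.2
          have hags' : ∀ ag ∈ r.abody, AggTrue ag (A ∩ S) := fun ag hag =>
            (aggTrue_inter (bottom_pred_mem hbot hag)).mpr (hags ag hag)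
          have hhead : r.head ∈ B := by
            refine hBsat r hbot hags' ⟨?_, fun ag hag => ?_⟩
            · exact fun a ha => hB'S ⟨hrb ha, bottom_rbody_sub hbot ha⟩
            · rw [aggWitness_inter (bottom_pred_mem hbot hag)]
              exact fun a ha => hB'S ⟨hwit ag hag ha,
                aggWitness_sub_S (bottom_pred_mem hbot hag) ha⟩
          exact Or.inl hhead
        · -- top rule: head ∉ S, head ∈ A
          have htop : r ∈ TopPart Pi S := ⟨hr, hbot⟩
          have hhead : r.head ∈ A :=
            hA r hr hags ⟨hrb.trans hB'A.1, fun ag hag => (hwit ag hag).trans hB'A.1⟩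
          exact Or.inr ⟨hhead, top_head_notMem hS htop⟩
    · -- A is an answer set of top ∪ facts
      constructor
      · rintro r (hr | hr) hags hbody
        · exact hA r hr.1 hags hbody
        · obtain ⟨a, ha, rfl⟩ := hr; exact ha.1
      · intro B hB hBsat
        have hASB : A ∩ S ⊆ B := facts_sub fun r hr => hBsat r (Or.inr hr)
        refine hAmin B hB ?_
        intro r hr hags hbody
        by_cases hbot : r ∈ BottomPart Pi S
        · have hhead : r.head ∈ A := hA r hr hags
            ⟨hbody.1.trans hB.1, fun ag hag => (hbody.2 ag hag).trans hB.1⟩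
          exact hASB ⟨hhead, hbot.2.1⟩
        · exact hBsat r (Or.inl ⟨hr, hbot⟩) hags hbody
  · rintro ⟨⟨hBot, hBotMin⟩, hTop, hTopMin⟩
    have hSat : SatisfiesAlogReduct Pi A A := by
      intro r hr hags hbody
      by_cases hbot : r ∈ BottomPart Pi S
      · have hags' : ∀ ag ∈ r.abody, AggTrue ag (A ∩ S) := fun ag hag =>
          (aggTrue_inter (bottom_pred_mem hbot hag)).mpr (hags ag hag)
        have : r.head ∈ A ∩ S := by
          refine hBot r hbot hags' ⟨fun a ha => ⟨hbody.1 ha, bottom_rbody_sub hbot ha⟩,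
            fun ag hag => ?_⟩
          rw [aggWitness_inter (bottom_pred_mem hbot hag)]
          exact fun a ha => ⟨aggWitness_sub ha, aggWitness_sub_S (bottom_pred_mem hbot hag) ha⟩
        exact this.1
      · exact hTop r (Or.inl ⟨hr, hbot⟩) hags hbody
    refine ⟨hSat, ?_⟩
    intro B hB hBsat
    by_cases hASB : A ∩ S ⊆ B
    · -- B satisfies top ∪ facts reduct, contradicting minimality
      refine hTopMin B hB ?_
      rintro r (hr | hr) hags hbody
      · exact hBsat r hr.1 hags hbody
      · obtain ⟨a, ha, rfl⟩ := hr; exact hASB ha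
    · -- B ∩ S ⊂ A ∩ S satisfies the bottom reduct
      have hss : B ∩ S ⊂ A ∩ S := by
        constructor
        · exact Set.inter_subset_inter_left _ hB.1
        · intro h
          exact hASB fun a ha => (h ha).1
      refine hBotMin (B ∩ S) hss ?_
      intro r hr hags hbody
      have hags' : ∀ ag ∈ r.abody, AggTrue ag A := fun ag hag =>
        (aggTrue_inter (bottom_pred_mem hr hag)).mp (hags ag hag)
      have hhead : r.head ∈ B := by
        refine hBsat r hr.1 hags' ⟨(hbody.1).trans Set.inter_subset_left, fun ag hag => ?_⟩
        rw [← aggWitness_inter (bottom_pred_mem hr hag)]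
        exact (hbody.2 ag hag).trans Set.inter_subset_left
      exact ⟨hhead, hr.2.1⟩
end
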